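/- arXiv:2409.05762 — 2 statements merged into one kernel-verified Lean document; each statement's English description precedes it below -/
import Mathlib

section
/- Let k_d, γ, R_0 be positive real numbers and let n ≥ 2 be an integer such that 2γ/(k_d·R_0³) = 1/(n(n+1)). Then for every integer m with 2 ≤ m < n, the linear growth rate σ_m := (k_d/2)(m−1) − γ·R_0^{−3}·m(m²−1) is strictly positive; that is, all Fourier modes 2 ≤ m < n of the linearized problem are unstable. -/
open Real

/-- If `2γ/(k_d R₀³) = 1/(n(n+1))` for some integer `n ≥ 2`, then every Fourier mode
`2 ≤ m < n` of the linearization around the disk of radius `R₀` is unstable, i.e. the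
growth rate `σ_m = (k_d/2)(m-1) - γ R₀⁻³ m(m²-1)` is strictly positive. -/
theorem modes_below_n_unstable (kd γ R0 : ℝ) (n : ℕ)
    (hkd : 0 < kd) (hγ : 0 < γ) (hR0 : 0 < R0) (hn : 2 ≤ n)
    (hrel : 2 * γ / (kd * R0 ^ 3) = 1 / ((n : ℝ) * ((n : ℝ) + 1))) :
    ∀ m : ℕ, 2 ≤ m → m < n →
      0 < kd / 2 * ((m : ℝ) - 1) - γ * R0 ^ (-3 : ℤ) * (m : ℝ) * ((m : ℝ) ^ 2 - 1) := by
  intro m hm2 hmn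
  have hn1 : (2:ℝ) ≤ (n:ℝ) := by exact_mod_cast hn
  have hN : (0:ℝ) < (n:ℝ) * ((n:ℝ) + 1) := by nlinarith
  have hR3 : (0:ℝ) < R0 ^ 3 := by positivity
  have hγR : γ * R0 ^ (-3 : ℤ) = kd / (2 * ((n:ℝ) * ((n:ℝ) + 1))) := by
    have h3 : R0 ^ (-3 : ℤ) = (R0 ^ 3)⁻¹ := by
      rw [show ((-3 : ℤ)) = -(3 : ℕ) by norm_num, zpow_neg, zpow_natCast]
    rw [h3]
    field_simp at hrel ⊢
    nlinarith [hrel]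
  have hm : (2:ℝ) ≤ (m:ℝ) := by exact_mod_cast hm2
  have hmn' : (m:ℝ) + 1 ≤ (n:ℝ) := by exact_mod_cast hmn
  rw [hγR]
  have hEq : kd / 2 * ((m : ℝ) - 1)
      - kd / (2 * ((n:ℝ) * ((n:ℝ) + 1))) * (m : ℝ) * ((m : ℝ) ^ 2 - 1)
      = kd * (((m:ℝ) - 1) * ((n:ℝ) * ((n:ℝ) + 1) - (m:ℝ) * ((m:ℝ) + 1)))
        / (2 * ((n:ℝ) * ((n:ℝ) + 1))) := by
    field_simp
    ring
  rw [hEq]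
  apply div_pos
  · apply mul_pos hkd
    apply mul_pos (by linarith)
    nlinarith
  · linarith
end

section
/- Let β, λ_1, λ_2 ∈ ℝ and let h(w) = ∑_{n≥2} a_n w^{n+1} with real coefficients satisfying ∑_{n≥2} n³|a_n| < ∞. Define the explicit linear operator L[β](λ_1, λ_2, h)(θ) := (1/2)λ_1 + λ_2 cos θ + (β/4)·∂_θ H[s ↦ Re(e^{is}h''(e^{is}))](θ) − (β/4)·∂_θ H[s ↦ Re(h'(e^{is}))](θ) − (1/2)·∂_θ H[s ↦ Re(e^{−is}h(e^{is}))](θ) + (1/2)·Re[e^{iθ}·conj(h(e^{iθ}))]. Then for every θ, L[β](λ_1, λ_2, h)(θ) = (1/2)λ_1 + λ_2 cos θ + (1/4)∑_{n≥2} a_n n(n+1)(n−1)(β − β_n) cos(nθ), where β_n := 2/(n(n+1)). -/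
open Real Filter MeasureTheory Set

/-- The point `w = e^{iθ}` on the unit circle. -/
noncomputable def wc (θ : ℝ) : ℂ := Complex.exp (θ * Complex.I)

/-- `h(w) = ∑_{n≥2} a_n w^{n+1}` at `w = e^{iθ}`. -/
noncomputable def hMap (a : ℕ → ℝ) (θ : ℝ) : ℂ :=
  ∑' n : ℕ, (a n : ℂ) * wc θ ^ (n + 1)

/-- `h'(w) = ∑_{n≥2} a_n (n+1) w^n` at `w = e^{iθ}`. -/
noncomputable def hD (a : ℕ → ℝ) (θ : ℝ) : ℂ :=
  ∑' n : ℕ, (a n : ℂ) * ((n : ℂ) + 1) * wc θ ^ n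

/-- `h''(w) = ∑_{n≥2} a_n (n+1) n w^{n-1}` at `w = e^{iθ}`. -/
noncomputable def hDD (a : ℕ → ℝ) (θ : ℝ) : ℂ :=
  ∑' n : ℕ, (a n : ℂ) * ((n : ℂ) + 1) * (n : ℂ) * wc θ ^ (n - 1)

/-- The periodic Hilbert transform
`H[g](θ) = (1/(2π)) p.v. ∫₀^{2π} g(s) cot((θ-s)/2) ds`. -/
noncomputable def hilbertT (g : ℝ → ℝ) (θ : ℝ) : ℝ :=
  (1 / (2 * π)) *
    limUnder (nhdsWithin (0 : ℝ) (Ioi 0)) (fun δ : ℝ =>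
      ∫ s in {s : ℝ | s ∈ Icc 0 (2 * π) ∧ δ ≤ |Real.sin ((θ - s) / 2)|},
        g s * Real.cot ((θ - s) / 2))

/-- The linearization of the traveling-wave functional at the trivial solution:
`L[β](λ₁,λ₂,h)(θ) = (1/2)λ₁ + λ₂ cos θ + (β/4) ∂_θ H[Re(w h''(w))](θ)
 - (β/4) ∂_θ H[Re(h'(w))](θ) - (1/2) ∂_θ H[Re(w̄ h(w))](θ) + (1/2) Re[w conj(h(w))]`. -/
noncomputable def Lop (β lam1 lam2 : ℝ) (a : ℕ → ℝ) (θ : ℝ) : ℝ :=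
  1 / 2 * lam1 + lam2 * Real.cos θ
    + β / 4 * deriv (hilbertT fun s => (wc s * hDD a s).re) θ
    - β / 4 * deriv (hilbertT fun s => (hD a s).re) θ
    - 1 / 2 * deriv (hilbertT fun s => (Complex.exp (-(s : ℂ) * Complex.I) * hMap a s).re) θ
    + 1 / 2 * (wc θ * (starRingEnd ℂ) (hMap a θ)).re

/-!
Everything is diagonal in the Fourier basis. On `w = e^{iθ}` the functions `Re(w h''(w))`,
`Re(h'(w))`, `Re(w̄ h(w))` and `Re(w conj(h(w)))` are cosine series with coefficients
`a_n (n+1) n`, `a_n (n+1)`, `a_n`, `a_n`, and `∂_θ H` sends `cos (n θ)` to `n cos (n θ)`; collecting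
coefficients gives `a_n (n-1) (β n(n+1)/4 - 1/2)`.

The Hilbert transform of `∑ c_n cos (n s)` is computed from its principal-value definition. Centring
the period window at `θ` and folding `u ↦ -u` turns the truncated integral into
`∫_ε^π ∑ 2 c_n sin (n θ) sin (n u) cot (u/2) du` with `ε = 2 arcsin δ`. Since `sin (n u) cot (u/2)`
is a trigonometric polynomial with integral `π` over `[0, π]` (for `n ≥ 1`), the integrand extends
continuously to `u = 0`, and the principal value is `π ∑ 2 c_n sin (n θ)`.
-/

open Topology

/-- `sin (n u) cot (u / 2)` as a trigonometric polynomial: for `n ≥ 1` it is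
`1 + cos (n u) + 2 ∑_{0<k<n} cos (k u)`, and the form below also vanishes at `n = 0`. -/
noncomputable def cotKernel (n : ℕ) (u : ℝ) : ℝ :=
  cos (n * u) - 1 + 2 * ∑ k ∈ Finset.range n, cos (k * u)

theorem sin_nat_mul_mul_cos_half (n : ℕ) (u : ℝ) :
    sin (n * u) * cos (u / 2) = sin (u / 2) * cotKernel n u := by
  induction n with
  | zero => simp [cotKernel]
  | succ n ih =>
    have hsucc : cotKernel (n + 1) u = cotKernel n u + cos (n * u) + cos ((n + 1) * u) := by
      simp only [cotKernel, Finset.sum_range_succ]; push_cast; ring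
    have hsin : sin u = 2 * sin (u / 2) * cos (u / 2) := by rw [← sin_two_mul]; ring_nf
    have hcos : cos u = 2 * cos (u / 2) ^ 2 - 1 := by rw [← cos_two_mul]; ring_nf
    rw [hsucc, Nat.cast_succ, add_mul, one_mul, sin_add, cos_add, hsin, hcos]
    linear_combination ih + 2 * sin (n * u) * cos (u / 2) * sin_sq_add_cos_sq (u / 2)

theorem sin_nat_mul_mul_cot_half (n : ℕ) {u : ℝ} (hu : sin (u / 2) ≠ 0) :
    sin (n * u) * cot (u / 2) = cotKernel n u := by
  rw [cot_eq_cos_div_sin, ← mul_div_assoc, sin_nat_mul_mul_cos_half, mul_div_cancel_left₀ _ hu]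

@[fun_prop]
theorem continuous_cotKernel (n : ℕ) : Continuous (cotKernel n) := by
  unfold cotKernel; fun_prop

theorem abs_cotKernel_le (n : ℕ) (u : ℝ) : |cotKernel n u| ≤ 2 * n + 2 := by
  have hsum : |∑ k ∈ Finset.range n, cos (k * u)| ≤ n := by
    simpa using (Finset.abs_sum_le_sum_abs (fun k : ℕ => cos (k * u)) (Finset.range n)).trans
      (Finset.sum_le_sum fun k _ => abs_cos_le_one (k * u))
  rw [abs_le] at hsum ⊢
  have := neg_one_le_cos (n * u)
  have := cos_le_one (n * u)
  constructor <;> unfold cotKernel <;> linarith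

theorem integral_cos_nat_mul_zero_pi {k : ℕ} (hk : k ≠ 0) : ∫ u in (0)..π, cos (k * u) = 0 := by
  rw [intervalIntegral.integral_comp_mul_left (fun x => cos x) (Nat.cast_ne_zero.mpr hk),
    integral_cos]
  simp [sin_nat_mul_pi]

theorem integral_cotKernel {n : ℕ} (hn : n ≠ 0) : ∫ u in (0)..π, cotKernel n u = π := by
  obtain ⟨m, rfl⟩ := Nat.exists_eq_succ_of_ne_zero hn
  have hint : ∀ f : ℝ → ℝ, Continuous f → IntervalIntegrable f volume 0 π :=
    fun f hf => hf.intervalIntegrable 0 π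
  have hsum : ∫ u in (0)..π, ∑ k ∈ Finset.range (m + 1), cos (k * u) = π := by
    rw [intervalIntegral.integral_finsetSum fun k _ => hint _ (by fun_prop),
      Finset.sum_range_succ',
      Finset.sum_eq_zero fun k _ => integral_cos_nat_mul_zero_pi k.succ_ne_zero]
    simp
  unfold cotKernel
  rw [intervalIntegral.integral_add (hint _ (by fun_prop)) (hint _ (by fun_prop)),
    intervalIntegral.integral_sub (hint _ (by fun_prop)) (hint _ (by fun_prop)),
    intervalIntegral.integral_const_mul, hsum, integral_cos_nat_mul_zero_pi hn,
    intervalIntegral.integral_const]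
  simp only [sub_zero, smul_eq_mul, mul_one]
  ring

theorem Real.measurable_cot : Measurable cot := by
  rw [show cot = fun x => cos x / sin x from funext cot_eq_cos_div_sin]
  fun_prop

theorem Real.cot_neg (x : ℝ) : cot (-x) = -cot x := by
  rw [cot_eq_cos_div_sin, cot_eq_cos_div_sin, cos_neg, sin_neg, div_neg]

theorem Real.cot_add_pi (x : ℝ) : cot (x + π) = cot x := by
  rw [cot_eq_cos_div_sin, cot_eq_cos_div_sin, cos_add_pi, sin_add_pi, neg_div_neg_eq]

theorem Real.abs_cot_le_inv {x δ : ℝ} (hδ : 0 < δ) (hx : δ ≤ |sin x|) : |cot x| ≤ δ⁻¹ := by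
  rw [cot_eq_cos_div_sin, abs_div, div_eq_mul_inv]
  calc |cos x| * |sin x|⁻¹ ≤ 1 * δ⁻¹ := by
        gcongr
        exacts [abs_cos_le_one x]
    _ = δ⁻¹ := one_mul _

theorem le_abs_sin_half_iff {δ u : ℝ} (hδ : δ ∈ Icc (-1) 1) (hu : |u| ≤ π) :
    δ ≤ |sin (u / 2)| ↔ 2 * arcsin δ ≤ |u| := by
  have habs : |sin (u / 2)| = sin (|u| / 2) := by
    rcases abs_cases u with ⟨hu', hu0⟩ | ⟨hu', hu0⟩ <;> rw [hu'] at hu ⊢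
    · exact abs_of_nonneg (sin_nonneg_of_nonneg_of_le_pi (by linarith) (by linarith [pi_pos]))
    · rw [neg_div, sin_neg, abs_of_nonpos (sin_nonpos_of_nonpos_of_neg_pi_le (by linarith)
        (by linarith))]
  rw [habs, ← arcsin_le_iff_le_sin hδ ⟨by linarith [abs_nonneg u, pi_pos], by linarith⟩]
  constructor <;> intro h <;> linarith

theorem intervalIntegrable_indicator_mul_cot_half {f : ℝ → ℝ} (hf : Continuous f) {δ : ℝ}
    (hδ : 0 < δ) (a b : ℝ) :
    IntervalIntegrable ({u | δ ≤ |sin (u / 2)|}.indicator fun u => f u * cot (u / 2))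
      volume a b := by
  have hT : MeasurableSet {u : ℝ | δ ≤ |sin (u / 2)|} :=
    measurableSet_le measurable_const (by fun_prop)
  refine (hf.mul_const δ⁻¹).intervalIntegrable a b |>.mono_fun
    ((hf.measurable.mul (measurable_cot.comp (by fun_prop))).indicator hT).aestronglyMeasurable
    (ae_of_all _ fun u => ?_)
  simp only [Real.norm_eq_abs, abs_mul, abs_inv, abs_of_pos hδ, indicator]
  split_ifs with hu
  · rw [abs_mul]
    exact mul_le_mul_of_nonneg_left (abs_cot_le_inv hδ hu) (abs_nonneg _)
  · rw [abs_zero]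
    positivity

theorem integral_indicator_mul_cot_half_eq {f : ℝ → ℝ} (hf : Continuous f) {δ : ℝ} (hδ0 : 0 < δ)
    (hδ1 : δ ≤ 1) :
    ∫ u in (-π)..π, {u | δ ≤ |sin (u / 2)|}.indicator (fun u => f u * cot (u / 2)) u
      = ∫ u in (2 * arcsin δ)..π, (f u - f (-u)) * cot (u / 2) := by
  set ε := 2 * arcsin δ
  have hε0 : 0 < ε := by have := arcsin_pos.mpr hδ0; positivity
  have hεπ : ε ≤ π := by have := arcsin_le_pi_div_two δ; linarith
  set T := {u : ℝ | δ ≤ |sin (u / 2)|}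
  set K := T.indicator fun u => f u * cot (u / 2)
  have hK : ∀ a b, IntervalIntegrable K volume a b :=
    intervalIntegrable_indicator_mul_cot_half hf hδ0
  have hKeq : ∀ u, |u| ≤ π → ε ≤ |u| → K u = f u * cot (u / 2) := fun u hu hεu =>
    indicator_of_mem (s := T) ((le_abs_sin_half_iff ⟨by linarith, hδ1⟩ hu).mpr hεu) _
  have hmid : ∫ u in (-ε)..ε, K u = 0 := by
    rw [intervalIntegral.integral_of_le (by linarith), integral_Ioc_eq_integral_Ioo]
    refine setIntegral_eq_zero_of_forall_eq_zero fun u hu => indicator_of_notMem (s := T) ?_ _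
    have hu' : |u| < ε := abs_lt.mpr hu
    rw [Set.mem_ofPred_eq, le_abs_sin_half_iff ⟨by linarith, hδ1⟩ (by linarith), not_le]
    exact hu'
  have hKneg : IntervalIntegrable (fun u => K (-u)) volume ε π := by
    simpa using (IntervalIntegrable.iff_comp_neg).mp (hK (-ε) (-π))
  rw [← intervalIntegral.integral_add_adjacent_intervals (hK (-π) (-ε)) (hK (-ε) π),
    ← intervalIntegral.integral_add_adjacent_intervals (hK (-ε) ε) (hK ε π), hmid, zero_add,
    ← intervalIntegral.integral_comp_neg, ← intervalIntegral.integral_add hKneg (hK ε π)]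
  refine intervalIntegral.integral_congr fun u hu => ?_
  rw [uIcc_of_le hεπ] at hu
  have hu0 : |u| = u := abs_of_nonneg (by linarith [hu.1])
  rw [hKeq u (by rw [hu0]; exact hu.2) (by rw [hu0]; exact hu.1),
    hKeq (-u) (by rw [abs_neg, hu0]; exact hu.2) (by rw [abs_neg, hu0]; exact hu.1),
    neg_div, cot_neg]
  ring

theorem setIntegral_mul_cot_eq_integral_indicator {g : ℝ → ℝ} (hper : Function.Periodic g (2 * π))
    (θ δ : ℝ) :
    ∫ s in {s : ℝ | s ∈ Icc 0 (2 * π) ∧ δ ≤ |sin ((θ - s) / 2)|}, g s * cot ((θ - s) / 2)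
      = ∫ u in (-π)..π, {u | δ ≤ |sin (u / 2)|}.indicator (fun u => g (θ - u) * cot (u / 2)) u := by
  set T := {u : ℝ | δ ≤ |sin (u / 2)|}
  set K := T.indicator fun u => g (θ - u) * cot (u / 2)
  have hKper : Function.Periodic K (2 * π) := by
    intro u
    simp only [K, T, indicator, Set.mem_ofPred_eq, show (u + 2 * π) / 2 = u / 2 + π by ring,
      sin_add_pi, abs_neg, cot_add_pi, show θ - (u + 2 * π) = θ - u - 2 * π by ring, hper.sub_eq]
  have hpre : MeasurableSet ((θ - ·) ⁻¹' T) :=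
    show MeasurableSet {s : ℝ | δ ≤ |sin ((θ - s) / 2)|} from
      measurableSet_le measurable_const (by fun_prop)
  have hKθ : (fun s => K (θ - s))
      = ((θ - ·) ⁻¹' T).indicator fun s => g s * cot ((θ - s) / 2) := by
    ext s; simp only [K, indicator, sub_sub_cancel]; rfl
  calc _ = ∫ s in Icc 0 (2 * π), K (θ - s) := by
        rw [hKθ, setIntegral_indicator hpre]; rfl
    _ = ∫ s in (0)..(2 * π), K (θ - s) := by
        rw [integral_Icc_eq_integral_Ioc, intervalIntegral.integral_of_le (by positivity)]
    _ = ∫ u in (-π)..π, K u := by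
        rw [intervalIntegral.integral_comp_sub_left, sub_zero]
        convert hKper.intervalIntegral_add_eq (θ - 2 * π) (-π) using 2 <;> ring

theorem setIntegral_mul_cot_truncated_eq {g : ℝ → ℝ} (hg : Continuous g)
    (hper : Function.Periodic g (2 * π)) (θ : ℝ) {δ : ℝ} (hδ0 : 0 < δ) (hδ1 : δ ≤ 1) :
    ∫ s in {s : ℝ | s ∈ Icc 0 (2 * π) ∧ δ ≤ |sin ((θ - s) / 2)|}, g s * cot ((θ - s) / 2)
      = ∫ u in (2 * arcsin δ)..π, (g (θ - u) - g (θ + u)) * cot (u / 2) := by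
  rw [setIntegral_mul_cot_eq_integral_indicator hper,
    integral_indicator_mul_cot_half_eq (by fun_prop) hδ0 hδ1]
  simp only [sub_neg_eq_add]

noncomputable def cosSeries (c : ℕ → ℝ) (θ : ℝ) : ℝ := ∑' n : ℕ, c n * cos (n * θ)

noncomputable def sinSeries (c : ℕ → ℝ) (θ : ℝ) : ℝ := ∑' n : ℕ, c n * sin (n * θ)

noncomputable def cotKernelSeries (c : ℕ → ℝ) (θ u : ℝ) : ℝ :=
  ∑' n : ℕ, 2 * c n * sin (n * θ) * cotKernel n u

section TrigSeries

variable {c : ℕ → ℝ}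

theorem summable_abs_of_summable_nat_mul_abs (hc : Summable fun n : ℕ => (n : ℝ) * |c n|) :
    Summable fun n => |c n| := by
  refine (summable_nat_add_iff 1).mp (hc.comp_injective (add_left_injective 1) |>.of_nonneg_of_le
    (fun n => abs_nonneg _) fun n => ?_)
  simp only [Function.comp_apply, Nat.cast_add, Nat.cast_one]
  exact le_mul_of_one_le_left (abs_nonneg _) (by linarith [n.cast_nonneg (α := ℝ)])

theorem abs_mul_cos_le (x y : ℝ) : |x * cos y| ≤ |x| := by
  rw [abs_mul]; exact mul_le_of_le_one_right (abs_nonneg x) (abs_cos_le_one y)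

theorem abs_mul_sin_le (x y : ℝ) : |x * sin y| ≤ |x| := by
  rw [abs_mul]; exact mul_le_of_le_one_right (abs_nonneg x) (abs_sin_le_one y)

theorem hasSum_cosSeries (hc : Summable fun n => |c n|) (θ : ℝ) :
    HasSum (fun n : ℕ => c n * cos (n * θ)) (cosSeries c θ) :=
  (hc.of_norm_bounded fun _ => abs_mul_cos_le _ _).hasSum

theorem hasSum_sinSeries (hc : Summable fun n => |c n|) (θ : ℝ) :
    HasSum (fun n : ℕ => c n * sin (n * θ)) (sinSeries c θ) :=
  (hc.of_norm_bounded fun _ => abs_mul_sin_le _ _).hasSum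

theorem hasSum_cosSeries_nat_mul (hc : Summable fun n : ℕ => (n : ℝ) * |c n|) (θ : ℝ) :
    HasSum (fun n : ℕ => n * c n * cos (n * θ)) (cosSeries (fun n => n * c n) θ) :=
  hasSum_cosSeries (hc.congr fun n => by rw [abs_mul, Nat.abs_cast]) θ

theorem continuous_cosSeries (hc : Summable fun n => |c n|) : Continuous (cosSeries c) :=
  continuous_tsum (fun n => by fun_prop) hc fun _ _ => abs_mul_cos_le _ _

theorem periodic_cosSeries : Function.Periodic (cosSeries c) (2 * π) := fun θ =>
  tsum_congr fun n => by rw [mul_add, cos_add_nat_mul_two_pi]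

theorem cosSeries_sub_sub_cosSeries_add (hc : Summable fun n => |c n|) (θ u : ℝ) :
    cosSeries c (θ - u) - cosSeries c (θ + u)
      = ∑' n : ℕ, 2 * c n * sin (n * θ) * sin (n * u) := by
  refine (((hasSum_cosSeries hc _).sub (hasSum_cosSeries hc _)).congr_fun fun n => ?_).tsum_eq.symm
  rw [mul_sub, mul_add, cos_sub, cos_add]
  ring

theorem cosSeries_sub_sub_cosSeries_add_mul_cot (hc : Summable fun n => |c n|) (θ : ℝ) {u : ℝ}
    (hu : sin (u / 2) ≠ 0) :
    (cosSeries c (θ - u) - cosSeries c (θ + u)) * cot (u / 2) = cotKernelSeries c θ u := by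
  simp only [cotKernelSeries, cosSeries_sub_sub_cosSeries_add hc, ← tsum_mul_right, mul_assoc,
    sin_nat_mul_mul_cot_half _ hu]

theorem norm_cotKernelSeries_term_le (θ : ℝ) (n : ℕ) (u : ℝ) :
    ‖2 * c n * sin (n * θ) * cotKernel n u‖ ≤ 2 * |c n| * (2 * n + 2) := by
  rw [Real.norm_eq_abs, abs_mul, abs_mul, abs_mul, abs_two]
  have := abs_sin_le_one (n * θ)
  have := abs_cotKernel_le n u
  calc 2 * |c n| * |sin (n * θ)| * |cotKernel n u| ≤ 2 * |c n| * 1 * (2 * n + 2) := by gcongr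
    _ = _ := by ring

theorem summable_cotKernelSeries_bound (hc : Summable fun n : ℕ => (n : ℝ) * |c n|) :
    Summable fun n : ℕ => 2 * |c n| * (2 * n + 2) :=
  ((hc.mul_left 4).add ((summable_abs_of_summable_nat_mul_abs hc).mul_left 4)).congr fun n => by
    ring

theorem continuous_cotKernelSeries (hc : Summable fun n : ℕ => (n : ℝ) * |c n|) (θ : ℝ) :
    Continuous (cotKernelSeries c θ) :=
  continuous_tsum (fun n => by fun_prop) (summable_cotKernelSeries_bound hc)
    (norm_cotKernelSeries_term_le θ)

theorem integral_cotKernelSeries (hc : Summable fun n : ℕ => (n : ℝ) * |c n|) (θ : ℝ) :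
    ∫ u in (0)..π, cotKernelSeries c θ u = 2 * π * sinSeries c θ := by
  have hbound := summable_cotKernelSeries_bound hc
  refine (intervalIntegral.hasSum_integral_of_dominated_convergence _ (fun n => by fun_prop)
    (fun n => ae_of_all _ fun u _ => norm_cotKernelSeries_term_le θ n u)
    (ae_of_all _ fun u _ => hbound) intervalIntegrable_const
    (ae_of_all _ fun u _ => (hbound.of_norm_bounded
      (norm_cotKernelSeries_term_le θ · u)).hasSum)).unique ?_
  refine ((hasSum_sinSeries (summable_abs_of_summable_nat_mul_abs hc) θ).mul_left
    (2 * π)).congr_fun fun n => ?_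
  rcases eq_or_ne n 0 with rfl | hn
  · simp
  · rw [intervalIntegral.integral_const_mul, integral_cotKernel hn]; ring

theorem hilbertT_cosSeries (hc : Summable fun n : ℕ => (n : ℝ) * |c n|) (θ : ℝ) :
    hilbertT (cosSeries c) θ = sinSeries c θ := by
  have hc' := summable_abs_of_summable_nat_mul_abs hc
  have hΦ := continuous_cotKernelSeries hc θ
  have htrunc : ∀ δ ∈ Ioo (0 : ℝ) 1, ∫ u in (2 * arcsin δ)..π, cotKernelSeries c θ u
      = ∫ s in {s : ℝ | s ∈ Icc 0 (2 * π) ∧ δ ≤ |sin ((θ - s) / 2)|},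
          cosSeries c s * cot ((θ - s) / 2) := by
    intro δ hδ
    rw [setIntegral_mul_cot_truncated_eq (continuous_cosSeries hc') periodic_cosSeries θ hδ.1
      hδ.2.le]
    refine intervalIntegral.integral_congr fun u hu => ?_
    have hε0 : 0 < 2 * arcsin δ := by have := arcsin_pos.mpr hδ.1; positivity
    rw [uIcc_of_le (by have := arcsin_le_pi_div_two δ; linarith)] at hu
    exact (cosSeries_sub_sub_cosSeries_add_mul_cot hc' θ
      (sin_pos_of_pos_of_lt_pi (by linarith [hu.1]) (by linarith [hu.2, pi_pos])).ne').symm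
  have hlim : Tendsto (fun δ => ∫ u in (2 * arcsin δ)..π, cotKernelSeries c θ u) (𝓝[>] 0)
      (𝓝 (∫ u in (0)..π, cotKernelSeries c θ u)) := by
    have hcont : Continuous fun a => ∫ u in a..π, cotKernelSeries c θ u :=
      (intervalIntegral.continuous_primitive (fun a b => hΦ.intervalIntegrable a b) π).neg.congr
        fun a => (intervalIntegral.integral_symm π a).symm
    have := (hcont.comp (by fun_prop : Continuous fun δ : ℝ => 2 * arcsin δ)).tendsto 0
    simp only [Function.comp_apply, arcsin_zero, mul_zero] at this
    exact this.mono_left nhdsWithin_le_nhds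
  rw [hilbertT, (hlim.congr' (eventually_of_mem (Ioo_mem_nhdsGT one_pos) htrunc)).limUnder_eq,
    integral_cotKernelSeries hc]
  field_simp

theorem hasDerivAt_sinSeries (hc : Summable fun n : ℕ => (n : ℝ) * |c n|) (θ : ℝ) :
    HasDerivAt (sinSeries c) (cosSeries (fun n => n * c n) θ) θ := by
  refine hasDerivAt_tsum (g := fun n y => c n * sin (n * y))
    (g' := fun n y => n * c n * cos (n * y)) hc (fun n y => ?_) (fun n y => ?_) (y₀ := 0) ?_ θ
  · exact (((hasDerivAt_id y).const_mul (n : ℝ)).sin.const_mul (c n)).congr_deriv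
      (by simp only [id, mul_one]; ring)
  · calc ‖(n : ℝ) * c n * cos (n * y)‖ ≤ |(n : ℝ) * c n| := abs_mul_cos_le _ _
      _ = n * |c n| := by rw [abs_mul, Nat.abs_cast]
  · simp [summable_zero]

theorem deriv_hilbertT_cosSeries (hc : Summable fun n : ℕ => (n : ℝ) * |c n|) (θ : ℝ) :
    deriv (hilbertT (cosSeries c)) θ = cosSeries (fun n => n * c n) θ := by
  rw [funext (hilbertT_cosSeries hc)]
  exact (hasDerivAt_sinSeries hc θ).deriv

end TrigSeries

section BoundaryValues

variable (a : ℕ → ℝ)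

theorem re_ofReal_mul_wc_pow (b θ : ℝ) (n : ℕ) : ((b : ℂ) * wc θ ^ n).re = b * cos (n * θ) := by
  rw [wc, ← Complex.exp_nat_mul, ← mul_assoc, ← Complex.ofReal_natCast, ← Complex.ofReal_mul,
    Complex.re_ofReal_mul, Complex.exp_ofReal_mul_I_re]

theorem norm_ofReal_mul_wc_pow (b θ : ℝ) (n : ℕ) : ‖(b : ℂ) * wc θ ^ n‖ = |b| := by
  rw [norm_mul, norm_pow, wc, Complex.norm_exp_ofReal_mul_I, one_pow, mul_one, Complex.norm_real,
    Real.norm_eq_abs]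

theorem re_tsum_ofReal_mul_wc_pow {b : ℕ → ℝ} (hb : Summable fun n => |b n|) (θ : ℝ) :
    (∑' n : ℕ, (b n : ℂ) * wc θ ^ n).re = cosSeries b θ := by
  rw [Complex.re_tsum (hb.of_norm_bounded fun n => (norm_ofReal_mul_wc_pow _ _ n).le)]
  exact tsum_congr fun n => re_ofReal_mul_wc_pow _ _ n

theorem wc_mul_hDD (θ : ℝ) :
    wc θ * hDD a θ = ∑' n : ℕ, ((a n * (n + 1) * n : ℝ) : ℂ) * wc θ ^ n := by
  rw [hDD, ← tsum_mul_left]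
  refine tsum_congr fun n => ?_
  rcases n with _ | n
  · simp
  · push_cast
    rw [pow_succ]
    ring

theorem hD_eq (θ : ℝ) : hD a θ = ∑' n : ℕ, ((a n * (n + 1) : ℝ) : ℂ) * wc θ ^ n := by
  rw [hD]
  push_cast
  rfl

theorem exp_neg_mul_hMap (θ : ℝ) :
    Complex.exp (-(θ : ℂ) * Complex.I) * hMap a θ = ∑' n : ℕ, (a n : ℂ) * wc θ ^ n := by
  have hinv : Complex.exp (-(θ : ℂ) * Complex.I) * wc θ = 1 := by
    rw [wc, ← Complex.exp_add, neg_mul, neg_add_cancel, Complex.exp_zero]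
  rw [hMap, ← tsum_mul_left]
  refine tsum_congr fun n => ?_
  rw [pow_succ']
  linear_combination (a n : ℂ) * wc θ ^ n * hinv

theorem re_wc_mul_conj_hMap (θ : ℝ) :
    (wc θ * (starRingEnd ℂ) (hMap a θ)).re
      = (Complex.exp (-(θ : ℂ) * Complex.I) * hMap a θ).re := by
  rw [← Complex.conj_re, map_mul, Complex.conj_conj, wc, ← Complex.exp_conj, map_mul,
    Complex.conj_ofReal, Complex.conj_I, mul_neg, neg_mul]

end BoundaryValues

section Coefficients

variable {a : ℕ → ℝ}

theorem summable_nat_mul_abs_of_le_cube (ha : Summable fun n : ℕ => (n : ℝ) ^ 3 * |a n|)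
    {b : ℕ → ℝ} (hb : ∀ n : ℕ, (n : ℝ) * |b n| ≤ 2 * ((n : ℝ) ^ 3 * |a n|)) :
    Summable fun n : ℕ => (n : ℝ) * |b n| :=
  (ha.mul_left 2).of_nonneg_of_le (fun n => by positivity) hb

theorem summable_nat_mul_abs_coeffs (ha : Summable fun n : ℕ => (n : ℝ) ^ 3 * |a n|) :
    (Summable fun n : ℕ => (n : ℝ) * |a n * (n + 1) * n|) ∧
      (Summable fun n : ℕ => (n : ℝ) * |a n * (n + 1)|) ∧
      Summable fun n : ℕ => (n : ℝ) * |a n| := by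
  have hpoly : ∀ n : ℕ, (n : ℝ) * (n + 1) * n ≤ 2 * n ^ 3 ∧ (n : ℝ) * (n + 1) ≤ 2 * n ^ 3 ∧
      (n : ℝ) ≤ 2 * n ^ 3 := by
    intro n
    rcases n.eq_zero_or_pos with rfl | hn
    · simp
    · have h1 : (1 : ℝ) ≤ n := by exact_mod_cast hn
      have h0 : (0 : ℝ) ≤ n := n.cast_nonneg
      have := mul_nonneg h0 (sub_nonneg.2 h1)
      exact ⟨by nlinarith [mul_nonneg h0 this], by nlinarith [mul_nonneg h0 this], by nlinarith⟩
  have habs : ∀ n : ℕ, |(n : ℝ) + 1| = n + 1 := fun n => abs_of_nonneg (by positivity)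
  refine ⟨summable_nat_mul_abs_of_le_cube ha fun n => ?_,
    summable_nat_mul_abs_of_le_cube ha fun n => ?_, summable_nat_mul_abs_of_le_cube ha fun n => ?_⟩
  · rw [abs_mul, abs_mul, Nat.abs_cast, habs]
    nlinarith [mul_le_mul_of_nonneg_right (hpoly n).1 (abs_nonneg (a n))]
  · rw [abs_mul, habs]
    nlinarith [mul_le_mul_of_nonneg_right (hpoly n).2.1 (abs_nonneg (a n))]
  · nlinarith [mul_le_mul_of_nonneg_right (hpoly n).2.2 (abs_nonneg (a n))]

theorem linearized_coeff_eq (ha0 : a 0 = 0) (β : ℝ) (n : ℕ) :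
    β / 4 * (n * (a n * (n + 1) * n)) - β / 4 * (n * (a n * (n + 1))) - 1 / 2 * (n * a n)
        + 1 / 2 * a n
      = 1 / 4 * (a n * n * (n + 1) * (n - 1) * (β - 2 / (n * (n + 1)))) := by
  rcases n with _ | n
  · simp [ha0]
  · push_cast
    field_simp
    ring

theorem linearized_cosSeries_eq (ha0 : a 0 = 0)
    (ha : Summable fun n : ℕ => (n : ℝ) ^ 3 * |a n|) (β θ : ℝ) :
    β / 4 * cosSeries (fun n => n * (a n * (n + 1) * n)) θ
        - β / 4 * cosSeries (fun n => n * (a n * (n + 1))) θ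
        - 1 / 2 * cosSeries (fun n => n * a n) θ + 1 / 2 * cosSeries a θ
      = 1 / 4 * ∑' n : ℕ,
          a n * n * (n + 1) * (n - 1) * (β - 2 / (n * (n + 1))) * cos (n * θ) := by
  obtain ⟨h₂, h₁, h₀⟩ := summable_nat_mul_abs_coeffs ha
  have hcomb := ((((hasSum_cosSeries_nat_mul h₂ θ).mul_left (β / 4)).sub
    ((hasSum_cosSeries_nat_mul h₁ θ).mul_left (β / 4))).sub
    ((hasSum_cosSeries_nat_mul h₀ θ).mul_left (1 / 2))).add
    ((hasSum_cosSeries (summable_abs_of_summable_nat_mul_abs h₀) θ).mul_left (1 / 2))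
  rw [← hcomb.tsum_eq, ← tsum_mul_left]
  exact tsum_congr fun n => by linear_combination cos (n * θ) * linearized_coeff_eq ha0 β n

end Coefficients

theorem Lop_fourier_general (β lam1 lam2 : ℝ) (a : ℕ → ℝ) (ha0 : a 0 = 0)
    (hsum : Summable fun n : ℕ => (n : ℝ) ^ 3 * |a n|) :
    ∀ θ : ℝ,
      Lop β lam1 lam2 a θ
        = 1 / 2 * lam1 + lam2 * Real.cos θ
          + 1 / 4 * ∑' n : ℕ,
              a n * (n : ℝ) * ((n : ℝ) + 1) * ((n : ℝ) - 1)
                * (β - 2 / ((n : ℝ) * ((n : ℝ) + 1))) * Real.cos ((n : ℝ) * θ) := by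
  intro θ
  obtain ⟨h₂, h₁, h₀⟩ := summable_nat_mul_abs_coeffs hsum
  have hDD_re : ∀ s, (wc s * hDD a s).re = cosSeries (fun n => a n * (n + 1) * n) s := fun s => by
    rw [wc_mul_hDD, re_tsum_ofReal_mul_wc_pow (summable_abs_of_summable_nat_mul_abs h₂)]
  have hD_re : ∀ s, (hD a s).re = cosSeries (fun n => a n * (n + 1)) s := fun s => by
    rw [hD_eq, re_tsum_ofReal_mul_wc_pow (summable_abs_of_summable_nat_mul_abs h₁)]
  have hMap_re : ∀ s : ℝ, (Complex.exp (-(s : ℂ) * Complex.I) * hMap a s).re = cosSeries a s :=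
    fun s => by
      rw [exp_neg_mul_hMap, re_tsum_ofReal_mul_wc_pow (summable_abs_of_summable_nat_mul_abs h₀)]
  rw [Lop, funext hDD_re, funext hD_re, funext hMap_re, re_wc_mul_conj_hMap, hMap_re,
    deriv_hilbertT_cosSeries h₂, deriv_hilbertT_cosSeries h₁, deriv_hilbertT_cosSeries h₀,
    ← linearized_cosSeries_eq ha0 hsum]
  ring

/-- Fourier representation of the linearized operator:
`L[β](λ₁,λ₂,h)(θ) = (1/2)λ₁ + λ₂ cos θ
  + (1/4) ∑_{n≥2} a_n n(n+1)(n-1)(β - β_n) cos(nθ)`, with `β_n = 2/(n(n+1))`. -/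
theorem Lop_fourier (β lam1 lam2 : ℝ) (a : ℕ → ℝ) (ha0 : a 0 = 0) (ha1 : a 1 = 0)
    (hsum : Summable fun n : ℕ => (n : ℝ) ^ 3 * |a n|) :
    ∀ θ : ℝ,
      Lop β lam1 lam2 a θ
        = 1 / 2 * lam1 + lam2 * Real.cos θ
          + 1 / 4 * ∑' n : ℕ,
              a n * (n : ℝ) * ((n : ℝ) + 1) * ((n : ℝ) - 1)
                * (β - 2 / ((n : ℝ) * ((n : ℝ) + 1))) * Real.cos ((n : ℝ) * θ) :=
  Lop_fourier_general β lam1 lam2 a ha0 hsum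
end
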